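/- arXiv:1610.02865 — 3 statements merged into one kernel-verified Lean document; each statement's English description precedes it below -/
import Mathlib

section
/- For any linear orders α and β and any two sequences s : Fin m → α and t : Fin m → β of the same length m, the rank encodings are equal, E(s) = E(t), if and only if s and t are order-isomorphic, i.e., for all i j : Fin m, s(i) ≤ s(j) ↔ t(i) ≤ t(j). -/
/- The rank encoding `E(s)` of a sequence `s : Fin m → α` over a linear order:
`E(s)(i) = d_i + 1` if `s i` equals some earlier character, and `d_i + 1/2` otherwise,
where `d_i` is the number of distinct values among `s 0, …, s (i-1)` strictly smaller
than `s i`. -/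
open Classical in
noncomputable def rankEncode {m : ℕ} {α : Type*} [LinearOrder α] (s : Fin m → α) :
    Fin m → ℚ := fun i =>
  ((((Finset.univ : Finset (Fin m)).filter (fun j : Fin m => (j : ℕ) < (i : ℕ))).image s).filter
      (fun a => a < s i)).card +
    (if ∃ j : Fin m, (j : ℕ) < (i : ℕ) ∧ s j = s i then 1 else 1/2)

open Classical

/-- cardinalities of images agree under a local "same equalities" hypothesis -/
lemma RE.card_image_eq {m : ℕ} {α β : Type*} [LinearOrder α] [LinearOrder β]
    {s : Fin m → α} {t : Fin m → β} (G : Finset (Fin m))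
    (h : ∀ j ∈ G, ∀ k ∈ G, (s j = s k ↔ t j = t k)) :
    (G.image s).card = (G.image t).card := by
  classical
  apply Finset.card_bij (fun a ha => t (Finset.mem_image.mp ha).choose)
  · intro a ha
    have hc := (Finset.mem_image.mp ha).choose_spec
    exact Finset.mem_image.mpr ⟨_, hc.1, rfl⟩
  · intro a ha b hb hab
    have hca := (Finset.mem_image.mp ha).choose_spec
    have hcb := (Finset.mem_image.mp hb).choose_spec
    rw [← hca.2, ← hcb.2]
    exact (h _ hca.1 _ hcb.1).mpr hab
  · intro b hb
    obtain ⟨k, hk, rfl⟩ := Finset.mem_image.mp hb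
    have hmem : s k ∈ G.image s := Finset.mem_image.mpr ⟨k, hk, rfl⟩
    refine ⟨s k, hmem, ?_⟩
    have hc := (Finset.mem_image.mp hmem).choose_spec
    exact (h _ hc.1 _ hk).mp hc.2

lemma RE.lt_iff_card_lt {γ : Type*} [LinearOrder γ] (D : Finset γ) {a b : γ}
    (ha : a ∈ D) (hne : a ≠ b) :
    a < b ↔ (D.filter (fun x => x < a)).card < (D.filter (fun x => x < b)).card := by
  classical
  constructor
  · intro hab
    apply Finset.card_lt_card
    constructor
    · intro x hx
      rw [Finset.mem_filter] at hx ⊢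
      exact ⟨hx.1, hx.2.trans hab⟩
    · intro hsub
      have := hsub (Finset.mem_filter.mpr ⟨ha, hab⟩)
      rw [Finset.mem_filter] at this
      exact lt_irrefl _ this.2
  · intro hcard
    by_contra hba
    push_neg at hba
    have hba' : b < a := lt_of_le_of_ne hba (fun e => hne e.symm)
    have hsub : (D.filter (fun x => x < b)) ⊆ (D.filter (fun x => x < a)) := by
      intro x hx
      rw [Finset.mem_filter] at hx ⊢
      exact ⟨hx.1, hx.2.trans hba'⟩
    exact absurd (Finset.card_le_card hsub) (not_le.mpr hcard)

lemma RE.eq_of_card_eq {γ : Type*} [LinearOrder γ] (D : Finset γ) {a b : γ}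
    (ha : a ∈ D) (hb : b ∈ D)
    (h : (D.filter (fun x => x < a)).card = (D.filter (fun x => x < b)).card) : a = b := by
  by_contra hne
  rcases lt_or_gt_of_ne hne with hlt | hgt
  · exact absurd h (ne_of_lt ((RE.lt_iff_card_lt D ha hne).mp hlt))
  · exact absurd h.symm (ne_of_lt ((RE.lt_iff_card_lt D hb (Ne.symm hne)).mp hgt))

/-- split the rank-encoding equality at one index into the two components -/
lemma RE.split {m : ℕ} {α β : Type*} [LinearOrder α] [LinearOrder β]
    {s : Fin m → α} {t : Fin m → β} {j : Fin m}
    (h : rankEncode s j = rankEncode t j) :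
    ((((Finset.univ : Finset (Fin m)).filter (fun k : Fin m => (k : ℕ) < (j : ℕ))).image s).filter
      (fun a => a < s j)).card =
      ((((Finset.univ : Finset (Fin m)).filter (fun k : Fin m => (k : ℕ) < (j : ℕ))).image t).filter
      (fun a => a < t j)).card ∧
    ((∃ k : Fin m, (k : ℕ) < (j : ℕ) ∧ s k = s j) ↔ (∃ k : Fin m, (k : ℕ) < (j : ℕ) ∧ t k = t j)) := by
  classical
  unfold rankEncode at h
  by_cases hs : ∃ k : Fin m, (k : ℕ) < (j : ℕ) ∧ s k = s j <;>
    by_cases ht : ∃ k : Fin m, (k : ℕ) < (j : ℕ) ∧ t k = t j <;>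
    simp only [hs, ht, if_true, if_false, iff_true, iff_false] at h ⊢
  · refine ⟨?_, trivial⟩
    have h1 : ((((Finset.univ : Finset (Fin m)).filter (fun k : Fin m => (k : ℕ) < (j : ℕ))).image s).filter
      (fun a => a < s j)).card = (((((Finset.univ : Finset (Fin m)).filter (fun k : Fin m => (k : ℕ) < (j : ℕ))).image t).filter
      (fun a => a < t j)).card : ℚ) := by linarith
    exact_mod_cast h1
  · exfalso
    set d1 := ((((Finset.univ : Finset (Fin m)).filter (fun k : Fin m => (k : ℕ) < (j : ℕ))).image s).filter
      (fun a => a < s j)).card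
    set d2 := ((((Finset.univ : Finset (Fin m)).filter (fun k : Fin m => (k : ℕ) < (j : ℕ))).image t).filter
      (fun a => a < t j)).card
    have h2 : ((2 * d1 + 2 : ℕ) : ℚ) = ((2 * d2 + 1 : ℕ) : ℚ) := by push_cast; linarith
    have h3 : 2 * d1 + 2 = 2 * d2 + 1 := by exact_mod_cast h2
    omega
  · exfalso
    set d1 := ((((Finset.univ : Finset (Fin m)).filter (fun k : Fin m => (k : ℕ) < (j : ℕ))).image s).filter
      (fun a => a < s j)).card
    set d2 := ((((Finset.univ : Finset (Fin m)).filter (fun k : Fin m => (k : ℕ) < (j : ℕ))).image t).filter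
      (fun a => a < t j)).card
    have h2 : ((2 * d1 + 1 : ℕ) : ℚ) = ((2 * d2 + 2 : ℕ) : ℚ) := by push_cast; linarith
    have h3 : 2 * d1 + 1 = 2 * d2 + 2 := by exact_mod_cast h2
    omega
  · refine ⟨?_, trivial⟩
    have h1 : ((((Finset.univ : Finset (Fin m)).filter (fun k : Fin m => (k : ℕ) < (j : ℕ))).image s).filter
      (fun a => a < s j)).card = (((((Finset.univ : Finset (Fin m)).filter (fun k : Fin m => (k : ℕ) < (j : ℕ))).image t).filter
      (fun a => a < t j)).card : ℚ) := by linarith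
    exact_mod_cast h1

/-- Two sequences of the same length over linear orders have equal rank encodings
iff they are order-isomorphic. -/
theorem rankEncode_eq_iff_orderIso {m : ℕ} {α β : Type*} [LinearOrder α] [LinearOrder β]
    (s : Fin m → α) (t : Fin m → β) :
    rankEncode s = rankEncode t ↔ ∀ i j : Fin m, s i ≤ s j ↔ t i ≤ t j := by
  classical
  constructor
  · intro h
    have key : ∀ n : ℕ, ∀ i j : Fin m, (i : ℕ) < n → (j : ℕ) < n → (s i ≤ s j ↔ t i ≤ t j) := by
      intro n
      induction n with
      | zero => intro i j hi hj; omega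
      | succ n ih =>
        -- derived forms of the IH
        have iheq : ∀ i j : Fin m, (i : ℕ) < n → (j : ℕ) < n → (s i = s j ↔ t i = t j) := by
          intro i j hi hj
          rw [le_antisymm_iff, le_antisymm_iff, ih i j hi hj, ih j i hj hi]
        have ihlt : ∀ i j : Fin m, (i : ℕ) < n → (j : ℕ) < n → (s i < s j ↔ t i < t j) := by
          intro i j hi hj
          rw [lt_iff_le_not_ge, lt_iff_le_not_ge, ih i j hi hj, ih j i hj hi]
        -- the main step: compare index j with (j:ℕ) = n against earlier indices
        have main : ∀ j : Fin m, (j : ℕ) = n → ∀ i : Fin m, (i : ℕ) < n →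
            (s i < s j ↔ t i < t j) ∧ (s i = s j ↔ t i = t j) := by
          intro j hjn i hi
          set F : Finset (Fin m) :=
            (Finset.univ : Finset (Fin m)).filter (fun k : Fin m => (k : ℕ) < (j : ℕ)) with hF
          have hFmem : ∀ k : Fin m, k ∈ F ↔ (k : ℕ) < n := by
            intro k; simp [hF, hjn]
          have hFeq : ∀ a ∈ F, ∀ b ∈ F, (s a = s b ↔ t a = t b) := by
            intro a ha b hb
            exact iheq a b ((hFmem a).mp ha) ((hFmem b).mp hb)
          -- Claim C: the "rank below" counts agree for any index below n
          have claimC : ∀ k : Fin m, (k : ℕ) < n →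
              ((F.image s).filter (fun a => a < s k)).card =
              ((F.image t).filter (fun a => a < t k)).card := by
            intro k hk
            rw [Finset.filter_image, Finset.filter_image]
            have hfil : F.filter (fun x => s x < s k) = F.filter (fun x => t x < t k) := by
              apply Finset.filter_congr
              intro x hx
              simpa using ihlt x k ((hFmem x).mp hx) hk
            rw [hfil]
            apply RE.card_image_eq
            intro a ha b hb
            exact hFeq a (Finset.mem_filter.mp ha).1 b (Finset.mem_filter.mp hb).1
          have hsplit := RE.split (congrFun h j)
          have hd : ((F.image s).filter (fun a => a < s j)).card =
              ((F.image t).filter (fun a => a < t j)).card := hsplit.1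
          have hR := hsplit.2
          by_cases hrep : ∃ k : Fin m, (k : ℕ) < (j : ℕ) ∧ s k = s j
          · -- repeat case
            obtain ⟨i0, hi0, hsi0⟩ := hrep
            obtain ⟨i1, hi1, hti1⟩ := hR.mp ⟨i0, hi0, hsi0⟩
            rw [hjn] at hi0 hi1
            -- show t i0 = t j
            have hti0 : t i0 = t j := by
              rw [← hti1]
              apply RE.eq_of_card_eq (F.image t)
                (Finset.mem_image.mpr ⟨i0, (hFmem i0).mpr hi0, rfl⟩)
                (Finset.mem_image.mpr ⟨i1, (hFmem i1).mpr hi1, rfl⟩)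
              calc ((F.image t).filter (fun x => x < t i0)).card
                  = ((F.image s).filter (fun x => x < s i0)).card := (claimC i0 hi0).symm
                _ = ((F.image s).filter (fun x => x < s j)).card := by rw [hsi0]
                _ = ((F.image t).filter (fun x => x < t j)).card := hd
                _ = ((F.image t).filter (fun x => x < t i1)).card := by rw [hti1]
            constructor
            · rw [← hsi0, ← hti0]; exact ihlt i i0 hi hi0
            · rw [← hsi0, ← hti0]; exact iheq i i0 hi hi0
          · -- new-value case
            have hrep' : ¬ ∃ k : Fin m, (k : ℕ) < (j : ℕ) ∧ t k = t j := fun hc => hrep (hR.mpr hc)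
            have hsne : s i ≠ s j := fun e => hrep ⟨i, by omega, e⟩
            have htne : t i ≠ t j := fun e => hrep' ⟨i, by omega, e⟩
            have hmem_s : s i ∈ F.image s := Finset.mem_image.mpr ⟨i, (hFmem i).mpr hi, rfl⟩
            have hmem_t : t i ∈ F.image t := Finset.mem_image.mpr ⟨i, (hFmem i).mpr hi, rfl⟩
            constructor
            · rw [RE.lt_iff_card_lt (F.image s) hmem_s hsne,
                RE.lt_iff_card_lt (F.image t) hmem_t htne, claimC i hi, hd]
            · simp [hsne, htne]
        intro i j hi hj
        rcases Nat.lt_or_ge (i : ℕ) n with hi' | hi' <;>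
          rcases Nat.lt_or_ge (j : ℕ) n with hj' | hj'
        · exact ih i j hi' hj'
        · have hjn : (j : ℕ) = n := by omega
          have := main j hjn i hi'
          rw [le_iff_lt_or_eq, le_iff_lt_or_eq, this.1, this.2]
        · have hin : (i : ℕ) = n := by omega
          have := main i hin j hj'
          rw [← not_lt, ← not_lt, this.1]
        · have : i = j := Fin.ext (by omega)
          subst this
          simp
    intro i j
    exact key m i j i.isLt j.isLt
  · -- backward direction
    intro h
    funext j
    have heq : ∀ a b : Fin m, s a = s b ↔ t a = t b := by
      intro a b
      rw [le_antisymm_iff, le_antisymm_iff, h a b, h b a]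
    have hlt : ∀ a b : Fin m, s a < s b ↔ t a < t b := by
      intro a b
      rw [lt_iff_le_not_ge, lt_iff_le_not_ge, h a b, h b a]
    unfold rankEncode
    set F : Finset (Fin m) :=
      (Finset.univ : Finset (Fin m)).filter (fun k : Fin m => (k : ℕ) < (j : ℕ)) with hF
    have hcard : ((F.image s).filter (fun a => a < s j)).card =
        ((F.image t).filter (fun a => a < t j)).card := by
      rw [Finset.filter_image, Finset.filter_image]
      have hfil : F.filter (fun x => s x < s j) = F.filter (fun x => t x < t j) := by
        apply Finset.filter_congr
        intro x hx
        simpa using hlt x j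
      rw [hfil]
      apply RE.card_image_eq
      intro a _ b _
      exact heq a b
    have hex : (∃ k : Fin m, (k : ℕ) < (j : ℕ) ∧ s k = s j) ↔
        (∃ k : Fin m, (k : ℕ) < (j : ℕ) ∧ t k = t j) := by
      constructor
      · rintro ⟨k, hk, e⟩; exact ⟨k, hk, (heq k j).mp e⟩
      · rintro ⟨k, hk, e⟩; exact ⟨k, hk, (heq k j).mpr e⟩
    rw [hcard, if_congr hex rfl rfl]
end

section
/- Let S : Fin n → α and P : Fin m → β be sequences over linear orders with i + m ≤ n. Then P has an order-preserving occurrence at position i in S if and only if E(P) is a prefix of the rank encoding of the suffix of S starting at i, i.e., for all j < m, E(j ↦ S(i+j), of length n−i)(j) = E(P)(j). -/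
def OrderIsoSeq {m : ℕ} {α β : Type*} [LinearOrder α] [LinearOrder β]
    (s : Fin m → α) (t : Fin m → β) : Prop :=
  ∀ i j : Fin m, s i ≤ s j ↔ t i ≤ t j

open Finset

section Image

variable {ι α β : Type*} [DecidableEq α] [DecidableEq β] {B : Finset ι} {f : ι → α}
  {g : ι → β}

theorem Finset.card_image_eq_card_image_prod
    (h : ∀ j ∈ B, ∀ k ∈ B, f j = f k → g j = g k) :
    #(B.image f) = #(B.image fun j => (f j, g j)) := by
  rw [← card_image_of_injOn (f := Prod.fst), image_image]
  · rfl
  rintro _ hx _ hy hxy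
  simp only [coe_image, Set.mem_image, mem_coe] at hx hy
  obtain ⟨j, hj, rfl⟩ := hx
  obtain ⟨k, hk, rfl⟩ := hy
  exact Prod.ext hxy (h j hj k hk hxy)

theorem Finset.card_image_eq_card_image_of_eq_iff
    (h : ∀ j ∈ B, ∀ k ∈ B, f j = f k ↔ g j = g k) :
    #(B.image f) = #(B.image g) :=
  calc #(B.image f) = #(B.image fun j => (f j, g j)) :=
        card_image_eq_card_image_prod fun j hj k hk => (h j hj k hk).1
    _ = #(B.image fun j => (g j, f j)) := by
        rw [← card_image_of_injective _ Prod.swap_injective, image_image]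
        rfl
    _ = #(B.image g) := (card_image_eq_card_image_prod fun j hj k hk => (h j hj k hk).2).symm

end Image

section Rank

variable {α : Type*} [LinearOrder α] {X : Finset α} {x a : α}

theorem Finset.card_filter_lt_lt_card_filter_lt_iff (hx : x ∈ X) :
    #{y ∈ X | y < x} < #{y ∈ X | y < a} ↔ x < a := by
  refine ⟨fun hlt => not_le.1 fun hax => hlt.not_ge (card_le_card fun y hy => ?_),
    fun hxa => card_lt_card ((ssubset_iff_of_subset fun y hy => ?_).2 ⟨x, ?_, ?_⟩)⟩
  · simp only [mem_filter] at hy ⊢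
    exact ⟨hy.1, hy.2.trans_le hax⟩
  · simp only [mem_filter] at hy ⊢
    exact ⟨hy.1, hy.2.trans hxa⟩
  · simpa using ⟨hx, hxa⟩
  · simp

theorem Finset.eq_iff_mem_and_card_filter_lt_eq (hx : x ∈ X) :
    x = a ↔ a ∈ X ∧ #{y ∈ X | y < x} = #{y ∈ X | y < a} := by
  refine ⟨by rintro rfl; exact ⟨hx, rfl⟩, fun ⟨ha, hcard⟩ => ?_⟩
  rcases lt_trichotomy x a with hxa | hxa | hax
  · exact absurd hcard ((card_filter_lt_lt_card_filter_lt_iff hx).2 hxa).ne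
  · exact hxa
  · exact absurd hcard ((card_filter_lt_lt_card_filter_lt_iff ha).2 hax).ne'

end Rank

theorem natCast_add_ite_half_inj {a b : ℕ} {c d : Prop} [Decidable c] [Decidable d]
    (h : (a : ℚ) + (if c then 1 else 1 / 2) = b + (if d then 1 else 1 / 2)) :
    a = b ∧ (c ↔ d) := by
  have h2 := congrArg (2 * ·) h
  by_cases hc : c <;> by_cases hd : d <;> simp only [hc, hd, if_true, if_false] at h2 <;>
    field_simp at h2 <;> norm_cast at h2 <;> simp only [hc, hd, iff_self, and_true] <;> omega

section OrderIso

variable {ι α β : Type*} [LinearOrder α] [LinearOrder β]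

def OrderIsoOn (s : ι → α) (t : ι → β) (I : Set ι) : Prop :=
  ∀ i ∈ I, ∀ j ∈ I, s i ≤ s j ↔ t i ≤ t j

variable {s : ι → α} {t : ι → β} {I : Set ι} {i j : ι}

namespace OrderIsoOn

theorem mono {J : Set ι} (h : OrderIsoOn s t I) (hJ : J ⊆ I) : OrderIsoOn s t J :=
  fun i hi j hj => h i (hJ hi) j (hJ hj)

theorem lt_iff (h : OrderIsoOn s t I) (hi : i ∈ I) (hj : j ∈ I) : s i < s j ↔ t i < t j := by
  simp only [← not_le, h j hj i hi]

theorem eq_iff (h : OrderIsoOn s t I) (hi : i ∈ I) (hj : j ∈ I) : s i = s j ↔ t i = t j := by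
  simp only [le_antisymm_iff, h i hi j hj, h j hj i hi]

theorem insert_of_lt_iff_of_eq_iff {q : ι} (h : OrderIsoOn s t I)
    (hlt : ∀ k ∈ I, s k < s q ↔ t k < t q) (heq : ∀ k ∈ I, s k = s q ↔ t k = t q) :
    OrderIsoOn s t (insert q I) := by
  rintro i (rfl | hi) j (rfl | hj)
  · simp
  · simp only [← not_lt, hlt j hj]
  · simp only [le_iff_lt_or_eq, hlt i hi, heq i hi]
  · exact h i hi j hj

theorem card_image_filter_lt_eq {B : Finset ι} {q : ι} (h : OrderIsoOn s t (insert q ↑B)) :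
    #{a ∈ B.image s | a < s q} = #{b ∈ B.image t | b < t q} := by
  have hq : q ∈ insert q (B : Set ι) := Set.mem_insert q _
  have hB : ∀ j ∈ B, j ∈ insert q (B : Set ι) := fun j hj => Set.mem_insert_of_mem q hj
  rw [filter_image, filter_image, filter_congr fun j hj => h.lt_iff (hB j hj) hq]
  exact card_image_eq_card_image_of_eq_iff fun j hj k hk =>
    h.eq_iff (hB j (mem_filter.1 hj).1) (hB k (mem_filter.1 hk).1)

theorem mem_image_iff {B : Finset ι} {q : ι} (h : OrderIsoOn s t (insert q ↑B)) :
    s q ∈ B.image s ↔ t q ∈ B.image t := by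
  simp only [mem_image]
  exact exists_congr fun j => and_congr_right fun hj =>
    h.eq_iff (Set.mem_insert_of_mem q hj) (Set.mem_insert q _)

end OrderIsoOn

theorem orderIsoSeq_iff_orderIsoOn_univ {m : ℕ} {s : Fin m → α} {t : Fin m → β} :
    OrderIsoSeq s t ↔ OrderIsoOn s t Set.univ := by
  simp [OrderIsoSeq, OrderIsoOn]

end OrderIso

section RankEncode

variable {m : ℕ} {α β : Type*} [LinearOrder α] [LinearOrder β]

def prefixValues (s : Fin m → α) (p : Fin m) : Finset α :=
  (Iio p).image s

theorem rankEncode_apply (s : Fin m → α) (p : Fin m) :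
    rankEncode s p = #{a ∈ prefixValues s p | a < s p} +
      if s p ∈ prefixValues s p then 1 else 1 / 2 := by
  have hIio : (univ.filter fun j : Fin m => (j : ℕ) < p) = Iio p := by
    ext j
    simp
  simp only [rankEncode, prefixValues, hIio, mem_image, mem_Iio, Fin.lt_def]

theorem prefixValues_comp_castLE {n : ℕ} (h : m ≤ n) (s : Fin n → α) (p : Fin m) :
    prefixValues (s ∘ Fin.castLE h) p = prefixValues s (Fin.castLE h p) := by
  ext a
  simp only [prefixValues, mem_image, mem_Iio, Function.comp_apply]
  constructor
  · rintro ⟨k, hk, rfl⟩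
    exact ⟨Fin.castLE h k, (Fin.castLE_lt_castLE_iff h).2 hk, rfl⟩
  · rintro ⟨k, hk, rfl⟩
    exact ⟨⟨k, (Fin.lt_def.1 hk).trans p.isLt⟩, hk, rfl⟩

theorem rankEncode_comp_castLE {n : ℕ} (h : m ≤ n) (s : Fin n → α) (p : Fin m) :
    rankEncode (s ∘ Fin.castLE h) p = rankEncode s (Fin.castLE h p) := by
  rw [rankEncode_apply, rankEncode_apply, prefixValues_comp_castLE]
  rfl

variable {s : Fin m → α} {t : Fin m → β}

theorem OrderIsoOn.rankEncode_eq {p : Fin m} (h : OrderIsoOn s t (Set.Iic p)) :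
    rankEncode s p = rankEncode t p := by
  have h' : OrderIsoOn s t (insert p ↑(Iio p)) := by rwa [coe_Iio, Set.Iio_insert]
  rw [rankEncode_apply, rankEncode_apply, prefixValues, prefixValues,
    h'.card_image_filter_lt_eq, if_congr h'.mem_image_iff rfl rfl]

theorem OrderIsoOn.Iic_of_rankEncode_eq {p : Fin m} (h : OrderIsoOn s t (Set.Iio p))
    (hE : rankEncode s p = rankEncode t p) : OrderIsoOn s t (Set.Iic p) := by
  rw [rankEncode_apply, rankEncode_apply] at hE
  obtain ⟨hcard, hmem⟩ := natCast_add_ite_half_inj hE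
  have hrank : ∀ k ∈ Set.Iio p, #{a ∈ prefixValues s p | a < s k} =
      #{b ∈ prefixValues t p | b < t k} := fun k hk =>
    (h.mono (by rw [coe_Iio, Set.insert_eq_of_mem hk])).card_image_filter_lt_eq
  have hs : ∀ k ∈ Set.Iio p, s k ∈ prefixValues s p := fun k hk =>
    mem_image_of_mem s (mem_Iio.2 hk)
  have ht : ∀ k ∈ Set.Iio p, t k ∈ prefixValues t p := fun k hk =>
    mem_image_of_mem t (mem_Iio.2 hk)
  rw [← Set.Iio_insert]
  refine h.insert_of_lt_iff_of_eq_iff (fun k hk => ?_) (fun k hk => ?_)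
  · rw [← card_filter_lt_lt_card_filter_lt_iff (hs k hk),
      ← card_filter_lt_lt_card_filter_lt_iff (ht k hk), hrank k hk, hcard]
  · rw [eq_iff_mem_and_card_filter_lt_eq (hs k hk), eq_iff_mem_and_card_filter_lt_eq (ht k hk),
      hrank k hk, hcard, hmem]

theorem orderIsoSeq_iff_rankEncode_eq : OrderIsoSeq s t ↔ rankEncode s = rankEncode t := by
  rw [orderIsoSeq_iff_orderIsoOn_univ]
  refine ⟨fun h => funext fun p => (h.mono (Set.subset_univ _)).rankEncode_eq, fun hE => ?_⟩
  have hIic : ∀ p : Fin m, OrderIsoOn s t (Set.Iic p) := by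
    intro p
    induction p using WellFoundedLT.induction with
    | _ p ih =>
      refine OrderIsoOn.Iic_of_rankEncode_eq (fun i hi j hj => ?_) (congrFun hE p)
      exact ih (max i j) (max_lt hi hj) i (le_max_left i j) j (le_max_right i j)
  exact fun i _ j _ => hIic (max i j) i (le_max_left i j) j (le_max_right i j)

end RankEncode

/-- `P` has an order-preserving occurrence at position `i` in `S` (given `i + m ≤ n`)
iff `E(P)` is a prefix of the rank encoding of the suffix of `S` starting at `i`. -/
theorem opOccur_iff_rankEncode_prefix {n m : ℕ} {α β : Type*} [LinearOrder α] [LinearOrder β]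
    (S : Fin n → α) (P : Fin m → β) (i : ℕ) (h : i + m ≤ n) :
    OrderIsoSeq P (fun j : Fin m => S ⟨i + (j : ℕ), by have := j.isLt; omega⟩) ↔
      ∀ j : Fin m,
        rankEncode (fun k : Fin (n - i) => S ⟨i + (k : ℕ), by have := k.isLt; omega⟩)
            ⟨(j : ℕ), by have := j.isLt; omega⟩ =
          rankEncode P j := by
  have hm : m ≤ n - i := by omega
  rw [orderIsoSeq_iff_rankEncode_eq, funext_iff]
  refine forall_congr' fun j => ?_
  rw [eq_comm]
  exact Iff.of_eq (congrArg (· = rankEncode P j)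
    (rankEncode_comp_castLE hm (fun k : Fin (n - i) => S ⟨i + (k : ℕ), by omega⟩) j))
end

section
/- Let s, t : Fin n → α be injective sequences with the same set of values (range s = range t) and the same set of adjacent pairs, i.e., { (s(i), s(i+1)) : i with i+1 < n } = { (t(i), t(i+1)) : i with i+1 < n } as sets of ordered pairs. Then s = t. (In particular, a permutation is uniquely determined by its set of length-2 substrings, which is why an index for standard pattern matching of patterns of length 2 on a permutation allows recovering the permutation.) -/
/-- An injective sequence (in particular a permutation) is determined by its set of values
together with its set of adjacent ordered pairs, i.e., its set of length-2 substrings. -/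
theorem eq_of_range_eq_of_adjacentPairs_eq {n : ℕ} {α : Type*}
    (s t : Fin n → α) (hs : Function.Injective s) (ht : Function.Injective t)
    (hrange : Set.range s = Set.range t)
    (hadj : {p : α × α | ∃ i : ℕ, ∃ h : i + 1 < n, p = (s ⟨i, by omega⟩, s ⟨i + 1, h⟩)} =
      {p : α × α | ∃ i : ℕ, ∃ h : i + 1 < n, p = (t ⟨i, by omega⟩, t ⟨i + 1, h⟩)}) :
    s = t := by
  have key : ∀ i : ℕ, ∀ h : i < n, s ⟨i, h⟩ = t ⟨i, h⟩ := by
    intro i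
    induction i with
    | zero =>
      intro h
      have : t ⟨0, h⟩ ∈ Set.range s := hrange ▸ Set.mem_range_self _
      obtain ⟨x, hx⟩ := this
      rcases Nat.eq_zero_or_pos x.val with h0 | hpos
      · have : x = ⟨0, h⟩ := Fin.ext h0
        rw [this] at hx
        exact hx
      · exfalso
        have hlt : (x.val - 1) + 1 < n := by omega
        have hmem : (s ⟨x.val - 1, by omega⟩, s ⟨(x.val - 1) + 1, hlt⟩) ∈
            {p : α × α | ∃ i : ℕ, ∃ h : i + 1 < n, p = (s ⟨i, by omega⟩, s ⟨i + 1, h⟩)} :=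
          ⟨x.val - 1, hlt, rfl⟩
        rw [hadj] at hmem
        obtain ⟨j, hj, hp⟩ := hmem
        have h2 : s ⟨(x.val - 1) + 1, hlt⟩ = t ⟨j + 1, hj⟩ := congrArg Prod.snd hp
        have hx' : (⟨(x.val - 1) + 1, hlt⟩ : Fin n) = x := Fin.ext (Nat.succ_pred_eq_of_pos hpos)
        rw [hx', hx] at h2
        have := ht h2
        have : (0 : ℕ) = j + 1 := congrArg Fin.val this
        omega
    | succ i ih =>
      intro h
      have hi : i < n := by omega
      have hmem : (s ⟨i, by omega⟩, s ⟨i + 1, h⟩) ∈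
          {p : α × α | ∃ i : ℕ, ∃ h : i + 1 < n, p = (s ⟨i, by omega⟩, s ⟨i + 1, h⟩)} :=
        ⟨i, h, rfl⟩
      rw [hadj] at hmem
      obtain ⟨j, hj, hp⟩ := hmem
      have h1 : s ⟨i, hi⟩ = t ⟨j, by omega⟩ := congrArg Prod.fst hp
      have h2 : s ⟨i + 1, h⟩ = t ⟨j + 1, hj⟩ := congrArg Prod.snd hp
      rw [ih hi] at h1
      have hij : i = j := congrArg Fin.val (ht h1)
      subst hij
      exact h2
  funext x
  have := key x.val x.isLt
  simpa using this
end
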